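/- arXiv:1507.06756 — 3 statements merged into one kernel-verified Lean document; each statement's English description precedes it below -/
import Mathlib

section
/- Let n > a ≥ 1 be coprime integers, let n/a = [b_1, …, b_r] and n/(n−a) = [a_1, …, a_e] be the Hirzebruch–Jung continued fraction expansions with all entries ≥ 2. Then the concatenated Hirzebruch–Jung continued fraction [b_1, …, b_r, 1, a_e, …, a_1] is defined except for its full value, which equals 0 (i.e. all proper tails are nonzero and the total value is 0). -/
/-- Hirzebruch–Jung continued fraction: `hj [] = 0`, `hj (c :: cs) = c - (hj cs)⁻¹`.
(In particular `hj [c] = c` since `(0:ℚ)⁻¹ = 0`.) -/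
def hj : List ℚ → ℚ
  | [] => 0
  | c :: cs => c - (hj cs)⁻¹

/-- All proper nonempty tails (suffixes) of `l` have nonzero HJ value, i.e. the
continued fraction `hj l` is defined. -/
def hjTailsNonzero (l : List ℚ) : Prop :=
  ∀ l' : List ℚ, l' ≠ [] → l' ≠ l → l' <:+ l → hj l' ≠ 0

/-- The HJ continued fraction of `l` is defined and equals `0`. -/
def hjZero (l : List ℚ) : Prop :=
  hjTailsNonzero l ∧ hj l = 0

def castList (l : List ℤ) : List ℚ := l.map fun x => (x : ℚ)

/-!
Write `M(c) = !![c, -1; 1, 0]` and `M(c₁, …, cₜ) = M(c₁) ⋯ M(cₜ) ∈ SL₂(ℤ)`. When all `cᵢ ≥ 2`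
its first column `(p, q)` satisfies `0 ≤ q < p` and `[c₁, …, cₜ] = p / q`, so the hypotheses pin
the first columns of `M(b)` and `M(a)` to `(n, a)` and `(n, n - a)`. Reversing a list transposes
the matrix up to conjugation by `diag(1, -1)`, hence `[b_r, …, b_1] = n / x` and
`[a_e, …, a_1] = n / x'`, where `x, x' ∈ [0, n)` are the inverses of `a` and `-a` modulo `n`
(read off from `det = 1`). Thus `x + x' = n` and `[1, a_e, …, a_1] = 1 - x'/n = x/n`, and `(x, n)`
is the second column of `M(b)⁻¹`, i.e. `M(b) (x, n) = (0, 1)`: the total value is `0/1`.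
Peeling off `b_1, b_2, …` from the total value `0`, each next tail value `v` satisfies
`b_i - 1/v ∈ [0, 1)` with `b_i ≥ 2`, so `v ∈ (0, 1)`; the tails of `[a_e, …, a_1]` exceed `1`.
Hence no proper tail vanishes.
-/

open scoped Matrix

/-- `castList` elaborates as `List.map id` applied to the monadic coercion `List ℤ → List ℚ`,
so it is not definitionally `List.map Int.cast`. -/
lemma castList_eq_map (l : List ℤ) : castList l = l.map Int.cast := by
  induction l with
  | nil => rfl
  | cons c t ih => simp_all [castList]

lemma two_le_of_mem_castList {l : List ℤ} (hl : ∀ x ∈ l, 2 ≤ x) :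
    ∀ x ∈ castList l, (2 : ℚ) ≤ x := by
  rw [castList_eq_map, List.forall_mem_map]
  exact fun z hz => by exact_mod_cast hl z hz

lemma castList_append (l m : List ℤ) : castList (l ++ m) = castList l ++ castList m := by
  simp [castList_eq_map]

lemma hjTailsNonzero.cons {l : List ℚ} (h : hjTailsNonzero l) (hl : hj l ≠ 0) (c : ℚ) :
    hjTailsNonzero (c :: l) := by
  intro l' hne hne' hsuf
  rcases List.suffix_cons_iff.mp hsuf with rfl | hsuf
  · exact absurd rfl hne'
  · rcases eq_or_ne l' l with rfl | hne''
    · exact hl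
    · exact h l' hne hne'' hsuf

lemma one_lt_hj {l : List ℚ} (hl : ∀ x ∈ l, 2 ≤ x) (hne : l ≠ []) : 1 < hj l := by
  induction l with
  | nil => exact absurd rfl hne
  | cons c t ih =>
    have hc : 2 ≤ c := hl c List.mem_cons_self
    show 1 < c - (hj t)⁻¹
    rcases eq_or_ne t [] with rfl | ht
    · simp only [hj, inv_zero]
      linarith
    · have h1 : 1 < hj t := ih (fun x hx => hl x (List.mem_cons_of_mem c hx)) ht
      have h2 : (hj t)⁻¹ < 1 := inv_lt_one_of_one_lt₀ h1
      linarith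

lemma hjTailsNonzero_of_two_le {l : List ℚ} (hl : ∀ x ∈ l, 2 ≤ x) : hjTailsNonzero l :=
  fun _ hne _ hsuf => (one_pos.trans (one_lt_hj (fun x hx => hl x (hsuf.subset hx)) hne)).ne'

lemma hjTailsNonzero_cons_of_two_le {l : List ℚ} (hl : ∀ x ∈ l, 2 ≤ x) (hne : l ≠ []) (c : ℚ) :
    hjTailsNonzero (c :: l) :=
  (hjTailsNonzero_of_two_le hl).cons (one_pos.trans (one_lt_hj hl hne)).ne' c

lemma hjTailsNonzero_append {t m : List ℚ} (ht : ∀ x ∈ t, 2 ≤ x) (hm : hjTailsNonzero m)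
    (h0 : 0 ≤ hj (t ++ m)) (h1 : hj (t ++ m) < 1) : hjTailsNonzero (t ++ m) := by
  induction t with
  | nil => exact hm
  | cons c t ih =>
    have hc : 2 ≤ c := ht c List.mem_cons_self
    have hinv : 1 < (hj (t ++ m))⁻¹ := by
      change 0 ≤ c - (hj (t ++ m))⁻¹ at h0
      change c - (hj (t ++ m))⁻¹ < 1 at h1
      linarith
    obtain ⟨hpos, hlt⟩ := one_lt_inv_iff₀.mp hinv
    exact (ih (fun x hx => ht x (List.mem_cons_of_mem c hx)) hpos.le hlt).cons hpos.ne' c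

theorem Matrix.mulVec_fin_two_adjugate_col_one {R : Type*} [CommRing R]
    (M : Matrix (Fin 2) (Fin 2) R) : M *ᵥ ![-M 0 1, M 0 0] = ![0, M.det] := by
  ext i
  fin_cases i <;> simp [Matrix.mulVec, dotProduct, Fin.sum_univ_two, Matrix.det_fin_two] <;> ring

lemma Int.add_eq_of_mul_modEq_one {n a x x' : ℤ} (hn : 1 < n) (hcop : IsCoprime n a)
    (hx : 0 ≤ x) (hxn : x < n) (hx' : 0 ≤ x') (hx'n : x' < n)
    (h : a * x ≡ 1 [ZMOD n]) (h' : (n - a) * x' ≡ 1 [ZMOD n]) : x + x' = n := by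
  have hdvd : n ∣ a * (x + x') := by
    obtain ⟨u, hu⟩ := h.dvd
    obtain ⟨v, hv⟩ := h'.dvd
    exact ⟨v - u + x', by linear_combination hv - hu⟩
  obtain ⟨k, hk⟩ := hcop.dvd_of_dvd_mul_left hdvd
  obtain rfl | rfl : k = 0 ∨ k = 1 := by
    have : 0 ≤ k := by nlinarith
    have : k < 2 := by nlinarith
    omega
  · obtain rfl : x = 0 := by omega
    have := Int.le_of_dvd one_pos (by simpa using h.dvd)
    omega
  · simpa using hk

def hjMat (l : List ℤ) : Matrix (Fin 2) (Fin 2) ℤ := (l.map fun c => !![c, -1; 1, 0]).prod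

@[simp] lemma hjMat_nil : hjMat [] = 1 := rfl

@[simp] lemma hjMat_cons (c : ℤ) (l : List ℤ) : hjMat (c :: l) = !![c, -1; 1, 0] * hjMat l :=
  List.prod_cons

lemma hjMat_append (l m : List ℤ) : hjMat (l ++ m) = hjMat l * hjMat m := by
  simp [hjMat]

lemma det_hjMat (l : List ℤ) : (hjMat l).det = 1 := by
  induction l with
  | nil => simp
  | cons c t ih => rw [hjMat_cons, Matrix.det_mul, ih, Matrix.det_fin_two]; simp

lemma hjMat_reverse (l : List ℤ) :
    hjMat l.reverse = !![1, 0; 0, -1] * (hjMat l)ᵀ * !![1, 0; 0, -1] := by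
  induction l with
  | nil => ext i j; fin_cases i <;> fin_cases j <;> simp
  | cons c t ih =>
    have hflip : !![1, 0; 0, -1] * !![c, -1; 1, 0] = !![c, -1; 1, 0]ᵀ * !![1, 0; 0, -1] := by
      ext i j; fin_cases i <;> fin_cases j <;> simp [Matrix.mul_apply]
    rw [List.reverse_cons, hjMat_append, ih, hjMat_cons, hjMat_cons, hjMat_nil, mul_one,
      Matrix.transpose_mul]
    simp only [Matrix.mul_assoc, hflip]

lemma hjMat_reverse_zero_zero (l : List ℤ) : hjMat l.reverse 0 0 = hjMat l 0 0 := by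
  simp [hjMat_reverse, Matrix.mul_apply, Matrix.vecMul, dotProduct, Fin.sum_univ_two]

lemma hjMat_reverse_one_zero (l : List ℤ) : hjMat l.reverse 1 0 = -hjMat l 0 1 := by
  simp [hjMat_reverse, Matrix.mul_apply, Matrix.vecMul, dotProduct, Fin.sum_univ_two]

lemma hjMat_cons_zero (c : ℤ) (l : List ℤ) (j : Fin 2) :
    hjMat (c :: l) 0 j = c * hjMat l 0 j - hjMat l 1 j := by
  simp [Matrix.mul_apply, Fin.sum_univ_two, sub_eq_add_neg]

lemma hjMat_cons_one (c : ℤ) (l : List ℤ) (j : Fin 2) : hjMat (c :: l) 1 j = hjMat l 0 j := by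
  simp [Matrix.mul_apply, Fin.sum_univ_two]

lemma hjMat_cons_mulVec (c : ℤ) (l : List ℤ) (w : Fin 2 → ℤ) :
    hjMat (c :: l) *ᵥ w = ![c * (hjMat l *ᵥ w) 0 - (hjMat l *ᵥ w) 1, (hjMat l *ᵥ w) 0] := by
  rw [hjMat_cons, ← Matrix.mulVec_mulVec]
  ext i; fin_cases i <;> simp [Matrix.mulVec, dotProduct, Fin.sum_univ_two, sub_eq_add_neg]

lemma hjMat_bounds {l : List ℤ} (hl : ∀ x ∈ l, 2 ≤ x) :
    0 ≤ hjMat l 1 0 ∧ hjMat l 1 0 < hjMat l 0 0 := by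
  induction l with
  | nil => simp
  | cons c t ih =>
    have hc : 2 ≤ c := hl c List.mem_cons_self
    obtain ⟨h0, h1⟩ := ih (fun x hx => hl x (List.mem_cons_of_mem c hx))
    rw [hjMat_cons_zero, hjMat_cons_one]
    constructor <;> nlinarith

lemma hjMat_one_zero_mul_modEq (l : List ℤ) :
    hjMat l 1 0 * -hjMat l 0 1 ≡ 1 [ZMOD hjMat l 0 0] := by
  have hdet := det_hjMat l
  rw [Matrix.det_fin_two] at hdet
  exact Int.modEq_iff_dvd.mpr ⟨hjMat l 1 1, by linear_combination -hdet⟩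

lemma hj_castList_eq_div {l : List ℤ} (hl : ∀ x ∈ l, 2 ≤ x) :
    hj (castList l) = hjMat l 0 0 / hjMat l 1 0 := by
  induction l with
  | nil => simp [hj, castList]
  | cons c t ih =>
    have hpos : (0 : ℚ) < hjMat t 0 0 := by
      have := hjMat_bounds fun x hx => hl x (List.mem_cons_of_mem c hx)
      exact_mod_cast this.1.trans_lt this.2
    change (c : ℚ) - (hj (castList t))⁻¹ = _
    rw [ih (fun x hx => hl x (List.mem_cons_of_mem c hx)), hjMat_cons_zero, hjMat_cons_one, inv_div]
    push_cast
    field_simp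

lemma neg_hjMat_zero_one_bounds {l : List ℤ} (hl : ∀ x ∈ l, 2 ≤ x) :
    0 ≤ -hjMat l 0 1 ∧ -hjMat l 0 1 < hjMat l 0 0 := by
  simpa only [hjMat_reverse_zero_zero, hjMat_reverse_one_zero] using
    hjMat_bounds (l := l.reverse) (by simpa using hl)

lemma hj_castList_reverse {l : List ℤ} (hl : ∀ x ∈ l, 2 ≤ x) :
    hj (castList l.reverse) = hjMat l 0 0 / -hjMat l 0 1 := by
  rw [hj_castList_eq_div (by simpa using hl), hjMat_reverse_zero_zero, hjMat_reverse_one_zero,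
    Int.cast_neg]

lemma hjMat_eq_of_hj_eq {l : List ℤ} (hl : ∀ x ∈ l, 2 ≤ x) {n a : ℤ} (hn : n ≠ 0) (ha : 0 < a)
    (hcop : IsCoprime n a) (h : hj (castList l) = n / a) : hjMat l 0 0 = n ∧ hjMat l 1 0 = a := by
  rw [hj_castList_eq_div hl] at h
  have hq : 0 < hjMat l 1 0 := by
    refine (hjMat_bounds hl).1.lt_of_ne fun hq0 => hn ?_
    rw [← hq0, Int.cast_zero, div_zero, eq_comm, div_eq_zero_iff] at h
    exact_mod_cast h.resolve_right (by exact_mod_cast ha.ne')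
  have hdet := det_hjMat l
  rw [Matrix.det_fin_two] at hdet
  have hcop' : IsCoprime (hjMat l 0 0) (hjMat l 1 0) :=
    ⟨hjMat l 1 1, -hjMat l 0 1, by linear_combination hdet⟩
  exact Rat.div_int_inj hq ha (Int.isCoprime_iff_gcd_eq_one.mp hcop')
    (Int.isCoprime_iff_gcd_eq_one.mp hcop) h

lemma hj_castList_append_eq_div {t : List ℤ} (ht : ∀ x ∈ t, 2 ≤ x) {m : List ℚ}
    {w : Fin 2 → ℤ} (hm : hj m = w 0 / w 1) (h0 : 0 ≤ (hjMat t *ᵥ w) 0)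
    (h1 : (hjMat t *ᵥ w) 0 < (hjMat t *ᵥ w) 1) :
    hj (castList t ++ m) = (hjMat t *ᵥ w) 0 / (hjMat t *ᵥ w) 1 := by
  induction t with
  | nil => simpa [castList] using hm
  | cons c t ih =>
    have hc : 2 ≤ c := ht c List.mem_cons_self
    rw [hjMat_cons_mulVec] at h0 h1 ⊢
    simp only [Matrix.cons_val_zero, Matrix.cons_val_one] at h0 h1 ⊢
    have hpos : 0 < (hjMat t *ᵥ w) 0 := h0.trans_lt h1
    have hposQ : (0 : ℚ) < (hjMat t *ᵥ w) 0 := by exact_mod_cast hpos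
    change (c : ℚ) - (hj (castList t ++ m))⁻¹ = _
    rw [ih (fun x hx => ht x (List.mem_cons_of_mem c hx)) hpos.le (by nlinarith), inv_div]
    push_cast
    field_simp

lemma hjZero_castList_append {t : List ℤ} (ht : ∀ x ∈ t, 2 ≤ x) {m : List ℚ}
    (hm : hjTailsNonzero m) (hval : hj m = -hjMat t 0 1 / hjMat t 0 0) :
    hjZero (castList t ++ m) := by
  have hv : hjMat t *ᵥ ![-hjMat t 0 1, hjMat t 0 0] = ![0, 1] := by
    simpa only [det_hjMat] using (hjMat t).mulVec_fin_two_adjugate_col_one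
  have hzero : hj (castList t ++ m) = 0 := by
    simpa [hv] using hj_castList_append_eq_div ht (w := ![-hjMat t 0 1, hjMat t 0 0])
      (by simpa using hval) (by simp [hv]) (by simp [hv])
  exact ⟨hjTailsNonzero_append (two_le_of_mem_castList ht) hm hzero.ge
    (hzero.trans_lt zero_lt_one), hzero⟩

theorem stmt_3 (n a : ℤ) (ha : 1 ≤ a) (han : a < n) (hcop : Int.gcd n a = 1)
    (B A : List ℤ) (hB : ∀ x ∈ B, 2 ≤ x) (hA : ∀ x ∈ A, 2 ≤ x)
    (hBval : hj (castList B) = (n : ℚ) / a)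
    (hAval : hj (castList A) = (n : ℚ) / (n - a)) :
    hjZero (castList (B ++ 1 :: A.reverse)) := by
  have hcopB : IsCoprime n a := Int.isCoprime_iff_gcd_eq_one.mpr hcop
  have hcopA : IsCoprime n (n - a) := by
    simpa [sub_eq_add_neg, add_comm] using hcopB.neg_right.add_mul_left_right 1
  obtain ⟨hBn, hBa⟩ := hjMat_eq_of_hj_eq hB (by omega) (by omega) hcopB hBval
  obtain ⟨hAn, hAa⟩ := hjMat_eq_of_hj_eq hA (by omega) (by omega) hcopA (by exact_mod_cast hAval)
  have hsum : -hjMat B 0 1 + -hjMat A 0 1 = n := by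
    have hBb := neg_hjMat_zero_one_bounds hB
    have hAb := neg_hjMat_zero_one_bounds hA
    rw [hBn] at hBb
    rw [hAn] at hAb
    exact Int.add_eq_of_mul_modEq_one (by omega) hcopB hBb.1 hBb.2 hAb.1 hAb.2
      (by simpa only [hBn, hBa] using hjMat_one_zero_mul_modEq B)
      (by simpa only [hAn, hAa] using hjMat_one_zero_mul_modEq A)
  have hAne : A ≠ [] := by
    rintro rfl
    rw [hjMat_nil, Matrix.one_apply_eq] at hAn
    omega
  have hM : hj (castList (1 :: A.reverse)) = -hjMat B 0 1 / hjMat B 0 0 := by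
    change 1 - (hj (castList A.reverse))⁻¹ = _
    have hsumQ : (n : ℚ) = -hjMat B 0 1 + -hjMat A 0 1 := by exact_mod_cast hsum.symm
    have hn : (n : ℚ) ≠ 0 := by exact_mod_cast (by omega : n ≠ 0)
    rw [hj_castList_reverse hA, inv_div, hAn, hBn]
    field_simp
    linarith
  rw [castList_append]
  exact hjZero_castList_append hB (hjTailsNonzero_cons_of_two_le
    (two_le_of_mem_castList (by simpa using hA)) (by simpa [castList_eq_map] using hAne) 1) hM
end

section
/- Interior blow-down preserves zero continued fractions: let (n_1, …, n_e) be positive integers with e ≥ 3, with [n_1, …, n_e] defined and equal to 0, and suppose n_i = 1 for some 1 < i < e with n_{i−1} ≥ 2 and n_{i+1} ≥ 2. Then [n_1, …, n_{i−2}, n_{i−1} − 1, n_{i+1} − 1, n_{i+2}, …, n_e] is defined and equals 0. -/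
/-!
Writing `A = [v, …]` for the tail after the `1`, one has `[u, 1, v, …] = u - A / (A - 1) =
[u - 1, v - 1, …]` whenever `A ≠ 0, 1`, and since the value of a continued fraction depends on a
tail only through the value of that tail, the blow-down leaves the values of all longer tails
unchanged. Both `A` and `[1, v, …] = 1 - A⁻¹` are tails of the original fraction, hence nonzero,
which gives `A ≠ 0, 1`; the only genuinely new tail is `[v - 1, …] = A - 1 ≠ 0`.
-/

lemma hj_cons (c : ℚ) (cs : List ℚ) : hj (c :: cs) = c - (hj cs)⁻¹ := rfl

lemma hj_sub_one_cons (v : ℚ) (X : List ℚ) : hj ((v - 1) :: X) = hj (v :: X) - 1 := by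
  simp only [hj_cons]
  ring

lemma hj_append_of_hj_eq (p : List ℚ) {X Y : List ℚ} (h : hj X = hj Y) :
    hj (p ++ X) = hj (p ++ Y) := by
  induction p with
  | nil => exact h
  | cons a p ih => simp only [List.cons_append, hj_cons, ih]

lemma hj_blowdown (u v : ℚ) (X : List ℚ) (hA₀ : hj (v :: X) ≠ 0) (hA₁ : hj (v :: X) ≠ 1) :
    hj ((u - 1) :: (v - 1) :: X) = hj (u :: 1 :: v :: X) := by
  rw [hj_cons (u - 1), hj_sub_one_cons, hj_cons u, hj_cons 1]
  have hA₁' : hj (v :: X) - 1 ≠ 0 := sub_ne_zero.2 hA₁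
  field_simp
  ring

lemma hjTailsNonzero.of_suffix {l m : List ℚ} (h : hjTailsNonzero m) (hlm : l <:+ m) :
    hjTailsNonzero l := by
  intro l' hne hne' hl'
  refine h l' hne ?_ (hl'.trans hlm)
  rintro rfl
  exact hne' (hl'.eq_of_length_le hlm.length_le)

lemma hjTailsNonzero_cons_iff {a : ℚ} {l : List ℚ} :
    hjTailsNonzero (a :: l) ↔ ∀ l', l' ≠ [] → l' <:+ l → hj l' ≠ 0 := by
  constructor
  · intro h l' hne hl'
    refine h l' hne ?_ (hl'.trans (List.suffix_cons a l))
    rintro rfl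
    simpa using hl'.length_le
  · intro h l' hne hne' hl'
    exact h l' hne ((List.suffix_cons_iff.1 hl').resolve_left hne')

lemma hjTailsNonzero_append_of_hj_eq {p X Y : List ℚ} (hXY : hj X = hj Y) (hY : Y ≠ [])
    (hpY : hjTailsNonzero (p ++ Y)) (hX : hjTailsNonzero X) : hjTailsNonzero (p ++ X) := by
  intro l' hne hne' hl'
  by_cases hXl' : X <:+ l'
  · obtain ⟨t, rfl⟩ := hXl'
    rw [hj_append_of_hj_eq t hXY]
    refine hpY (t ++ Y) (by simp [hY]) ?_ (List.suffix_append_self_iff.2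
      (List.suffix_append_self_iff.1 hl'))
    intro htY
    exact hne' (by rw [List.append_cancel_right htY])
  · have hl'X := (List.suffix_or_suffix_of_suffix hl' (List.suffix_append p X)).resolve_right hXl'
    refine hX l' hne ?_ hl'X
    rintro rfl
    exact hXl' (List.suffix_refl _)

lemma hjZero_append_of_hj_eq {p X Y : List ℚ} (hXY : hj X = hj Y) (hY : Y ≠ [])
    (hpY : hjZero (p ++ Y)) (hX : hjTailsNonzero X) : hjZero (p ++ X) :=
  ⟨hjTailsNonzero_append_of_hj_eq hXY hY hpY.1 hX, by rw [hj_append_of_hj_eq p hXY, hpY.2]⟩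

theorem hjZero_blowdown {p X : List ℚ} {u v : ℚ} (h : hjZero (p ++ u :: 1 :: v :: X)) :
    hjZero (p ++ (u - 1) :: (v - 1) :: X) := by
  have hTails : ∀ l', l' ≠ [] → l' <:+ 1 :: v :: X → hj l' ≠ 0 :=
    hjTailsNonzero_cons_iff.1 (h.1.of_suffix (List.suffix_append _ _))
  have hA₀ : hj (v :: X) ≠ 0 := hTails _ (List.cons_ne_nil _ _) (List.suffix_cons _ _)
  have hA₁ : hj (v :: X) ≠ 1 := by
    intro hA
    refine hTails (1 :: v :: X) (List.cons_ne_nil _ _) (List.suffix_refl _) ?_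
    rw [hj_cons, hA]
    norm_num
  refine hjZero_append_of_hj_eq (hj_blowdown u v X hA₀ hA₁) (List.cons_ne_nil _ _) h ?_
  rw [hjTailsNonzero_cons_iff]
  intro l' hne hl'
  rcases List.suffix_cons_iff.1 hl' with rfl | hl'X
  · rw [hj_sub_one_cons]
    exact sub_ne_zero.2 hA₁
  · exact hTails l' hne (hl'X.trans ((List.suffix_cons _ _).trans (List.suffix_cons _ _)))

theorem stmt_10_general (l₁ l₂ : List ℤ) (u v : ℤ)
    (h : hjZero (castList (l₁ ++ u :: 1 :: v :: l₂))) :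
    hjZero (castList (l₁ ++ (u - 1) :: (v - 1) :: l₂)) := by
  simpa [castList] using hjZero_blowdown (by simpa [castList] using h)

theorem stmt_10 (l₁ l₂ : List ℤ) (u v : ℤ) (hu : 2 ≤ u) (hv : 2 ≤ v)
    (hpos : ∀ x ∈ l₁ ++ u :: 1 :: v :: l₂, 1 ≤ x)
    (h : hjZero (castList (l₁ ++ u :: 1 :: v :: l₂))) :
    hjZero (castList (l₁ ++ (u - 1) :: (v - 1) :: l₂)) :=
  stmt_10_general l₁ l₂ u v h
end

section
/- (Termination of the maximal resolution algorithm.) Fix a positive integer n. Consider finite lists of rationals of the form k/n with 0 < k < n, and the rewriting step that replaces some adjacent pair (x, y) in the list with x + y < 1 by the triple (x, x+y, y). Then there is no infinite sequence of such rewriting steps starting from any given list; that is, after finitely many steps one reaches a list in which every adjacent pair (x, y) satisfies x + y ≥ 1. -/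
/-!
Give an adjacent pair `(x, y)` the weight `3 ^ ((1 - x - y) / ε)`, where `ε > 0` bounds all
entries from below (for entries `k / n` one takes `ε = 1 / n`), and a list the sum of the weights
of its adjacent pairs. Entries stay `≥ ε` under blowing up, and a blow-up of `(x, y)` with
`x + y < 1` replaces the weight `w ≥ 1` of that pair by two weights `w * 3 ^ (-x / ε)` and
`w * 3 ^ (-y / ε)`, each at most `w / 3`. So every step lowers the total weight, which is
nonnegative, by at least `1 / 3`.
-/

/-- One rewriting step: replace an adjacent pair `(x, y)` with `x + y < 1` by the
triple `(x, x + y, y)`. -/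
def blowupStep (l l' : List ℚ) : Prop :=
  ∃ pre suf : List ℚ, ∃ x y : ℚ, x + y < 1 ∧
    l = pre ++ x :: y :: suf ∧ l' = pre ++ x :: (x + y) :: y :: suf

theorem not_exists_rel_seq_of_le_sub {α : Type*} (r : α → α → Prop) (P : α → Prop)
    (φ : α → ℝ) {δ : ℝ} (hδ : 0 < δ) (hφ : ∀ a, 0 ≤ φ a) (hP : ∀ a b, r a b → P a → P b)
    (hdec : ∀ a b, r a b → P a → φ b ≤ φ a - δ) {a : α} (ha : P a) :
    ¬ ∃ f : ℕ → α, f 0 = a ∧ ∀ m, r (f m) (f (m + 1)) := by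
  rintro ⟨f, rfl, hf⟩
  have hPf : ∀ m, P (f m) := fun m => Nat.rec ha (fun m ih => hP _ _ (hf m) ih) m
  have hφf : ∀ m : ℕ, φ (f m) ≤ φ (f 0) - m * δ := by
    intro m
    induction m with
    | zero => simp
    | succ m ih =>
      have := hdec _ _ (hf m) (hPf m)
      push_cast
      linarith
  obtain ⟨m, hm⟩ := exists_nat_gt (φ (f 0) / δ)
  rw [div_lt_iff₀ hδ] at hm
  linarith [hφf m, hφ (f m)]

noncomputable def pairWeight (ε x y : ℚ) : ℝ :=
  (3 : ℝ) ^ (((1 - x - y) / ε : ℚ) : ℝ)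

noncomputable def listWeight (ε : ℚ) : List ℚ → ℝ
  | x :: y :: t => pairWeight ε x y + listWeight ε (y :: t)
  | _ => 0

variable {ε : ℚ}

theorem pairWeight_pos (ε x y : ℚ) : 0 < pairWeight ε x y :=
  Real.rpow_pos_of_pos (by norm_num) _

theorem one_le_pairWeight (hε : 0 < ε) {x y : ℚ} (hxy : x + y < 1) : 1 ≤ pairWeight ε x y :=
  Real.one_le_rpow (by norm_num) (by exact_mod_cast div_nonneg (by linarith) hε.le)

theorem listWeight_nonneg (ε : ℚ) : ∀ l, 0 ≤ listWeight ε l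
  | x :: y :: t => add_nonneg (pairWeight_pos ε x y).le (listWeight_nonneg ε (y :: t))
  | [] | [_] => le_rfl

theorem listWeight_append_cons (ε a : ℚ) (rest : List ℚ) :
    ∀ pre, listWeight ε (pre ++ a :: rest) =
      listWeight ε (pre ++ [a]) + listWeight ε (a :: rest)
  | [] => by simp [listWeight]
  | [p] => by simp [listWeight]
  | p :: q :: pre => by
    simp only [List.cons_append, listWeight] at *
    rw [← List.cons_append, listWeight_append_cons ε a rest (q :: pre), List.cons_append,
      add_assoc]

theorem listWeight_blowup (ε x y : ℚ) (pre suf : List ℚ) :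
    listWeight ε (pre ++ x :: (x + y) :: y :: suf) =
      listWeight ε (pre ++ x :: y :: suf) +
        (pairWeight ε x (x + y) + pairWeight ε (x + y) y - pairWeight ε x y) := by
  rw [listWeight_append_cons, listWeight_append_cons ε x (y :: suf)]
  simp only [listWeight]
  ring

theorem pairWeight_comm (ε x y : ℚ) : pairWeight ε x y = pairWeight ε y x := by
  rw [pairWeight, pairWeight, sub_right_comm]

theorem pairWeight_add_right (ε x y z : ℚ) :
    pairWeight ε x (y + z) = pairWeight ε x y * (3 : ℝ) ^ (-(z / ε : ℚ) : ℝ) := by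
  rw [pairWeight, pairWeight, ← Real.rpow_add (by norm_num), ← Rat.cast_neg, ← Rat.cast_add]
  ring_nf

theorem rpow_neg_le_third {t : ℝ} (ht : 1 ≤ t) : (3 : ℝ) ^ (-t) ≤ 1 / 3 := by
  have := Real.rpow_le_rpow_of_exponent_le (show (1 : ℝ) ≤ 3 by norm_num) (neg_le_neg ht)
  rwa [Real.rpow_neg_one, inv_eq_one_div] at this

theorem pairWeight_mul_rpow_neg_le (hε : 0 < ε) {z : ℚ} (hz : ε ≤ z) (x y : ℚ) :
    pairWeight ε x y * (3 : ℝ) ^ (-(z / ε : ℚ) : ℝ) ≤ pairWeight ε x y / 3 := by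
  have hz' : (1 : ℝ) ≤ (z / ε : ℚ) := by exact_mod_cast (one_le_div hε).2 hz
  calc pairWeight ε x y * (3 : ℝ) ^ (-(z / ε : ℚ) : ℝ)
      ≤ pairWeight ε x y * (1 / 3) :=
        mul_le_mul_of_nonneg_left (rpow_neg_le_third hz') (pairWeight_pos ε x y).le
    _ = pairWeight ε x y / 3 := by ring

theorem pairWeight_blowup_le (hε : 0 < ε) {x y : ℚ} (hx : ε ≤ x) (hy : ε ≤ y)
    (hxy : x + y < 1) :
    pairWeight ε x (x + y) + pairWeight ε (x + y) y ≤ pairWeight ε x y - 1 / 3 := by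
  have hleft : pairWeight ε x (x + y) ≤ pairWeight ε x y / 3 := by
    rw [add_comm, pairWeight_add_right]
    exact pairWeight_mul_rpow_neg_le hε hx x y
  have hright : pairWeight ε (x + y) y ≤ pairWeight ε x y / 3 := by
    rw [pairWeight_comm, pairWeight_add_right, pairWeight_comm ε y]
    exact pairWeight_mul_rpow_neg_le hε hy x y
  linarith [one_le_pairWeight hε hxy]

theorem blowupStep.forall_le (hε : 0 ≤ ε) {l l' : List ℚ} (h : blowupStep l l')
    (hl : ∀ z ∈ l, ε ≤ z) : ∀ z ∈ l', ε ≤ z := by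
  obtain ⟨pre, suf, x, y, -, rfl, rfl⟩ := h
  have hx : ε ≤ x := hl x (by simp)
  have hy : ε ≤ y := hl y (by simp)
  intro z hz
  simp only [List.mem_append, List.mem_cons] at hz
  rcases hz with hz | rfl | rfl | rfl | hz
  · exact hl z (by simp [hz])
  · exact hx
  · linarith
  · exact hy
  · exact hl z (by simp [hz])

theorem blowupStep.listWeight_le (hε : 0 < ε) {l l' : List ℚ} (h : blowupStep l l')
    (hl : ∀ z ∈ l, ε ≤ z) : listWeight ε l' ≤ listWeight ε l - 1 / 3 := by
  obtain ⟨pre, suf, x, y, hxy, rfl, rfl⟩ := h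
  have := pairWeight_blowup_le hε (hl x (by simp)) (hl y (by simp)) hxy
  rw [listWeight_blowup]
  linarith

theorem not_exists_blowup_seq (hε : 0 < ε) {l : List ℚ} (hl : ∀ z ∈ l, ε ≤ z) :
    ¬ ∃ f : ℕ → List ℚ, f 0 = l ∧ ∀ m, blowupStep (f m) (f (m + 1)) :=
  not_exists_rel_seq_of_le_sub blowupStep (fun l => ∀ z ∈ l, ε ≤ z) (listWeight ε)
    (δ := 1 / 3) (by norm_num) (listWeight_nonneg ε) (fun _ _ h => h.forall_le hε.le)
    (fun _ _ h => h.listWeight_le hε) hl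

theorem stmt_15 (n : ℕ) (hn : 0 < n) (l : List ℚ)
    (hl : ∀ x ∈ l, ∃ k : ℕ, 0 < k ∧ k < n ∧ x = (k : ℚ) / n) :
    ¬ ∃ f : ℕ → List ℚ, f 0 = l ∧ ∀ m : ℕ, blowupStep (f m) (f (m + 1)) := by
  refine not_exists_blowup_seq (ε := 1 / n) (by positivity) fun x hx => ?_
  obtain ⟨k, hk, -, rfl⟩ := hl x hx
  gcongr
  exact_mod_cast hk
end
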